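/- Let q be a prime power and m > 4. Let α be a primitive element of F_{q^m} (a generator of the multiplicative group F_{q^m}^*), and let γ ∈ F_q be a quadratic non-residue in F_q (i.e., γ ≠ x² for every x ∈ F_q) such that, in F_{q^m}, γ ≠ (α^{q^s} + α)² for every integer s with 0 < s < m and gcd(s, m) = 1. Let C ⊆ F_{q^m}^4 be the F_{q^m}-span of the two vectors (1, 0, α, α²) and (0, 1, α², γα). Then C is an MRD code of dimension 2 (its minimum rank distance is 3), and C is not a generalized Gabidulin code: there exist no integer s with gcd(s, m) = 1 and no g_1, g_2, g_3, g_4 ∈ F_{q^m} linearly independent over F_q such that C equals the F_{q^m}-span of (g_1, g_2, g_3, g_4) and (g_1^{q^s}, g_2^{q^s}, g_3^{q^s}, g_4^{q^s}). -/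

import Mathlib

/-!
A nonzero codeword `x = a • r₁ + b • r₂` of rank at most two has two `F_q`-independent vectors
`l, u ∈ F_q⁴` in the kernel of `l ↦ ∑ lᵢ xᵢ = a P(l) + b Q(l)`, where `P, Q` are the analogous
forms of the rows `r₁, r₂`. Hence `P(l) Q(u) - P(u) Q(l) = 0`. This is a polynomial of degree
at most four in `α` whose coefficients are combinations of the Plücker coordinates `mᵢⱼ` of
`l ∧ u`, so they vanish because `1, α, …, α⁴` are independent over `F_q` (`m > 4`). Combined
with the Plücker relation this gives `γ m₀₃² = m₀₂²`, so all `mᵢⱼ` vanish as `γ` is a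
non-square, contradicting the independence of `l` and `u`.

If the code were `⟨g, σ g⟩` with `σ x = x ^ q ^ s`, then it and its image under `σ` would lie in
`⟨g, σ g, σ² g⟩`, of dimension at most three. But `r₁, r₂, σ r₁, σ r₂` are independent: their
determinant is `(α - β)² (γ - (α + β)²)` with `β = σ α ≠ α`, and the hypothesis on `γ` applies
because `σ` is the `(s mod m)`-th power of the Frobenius.
-/

open Matrix

/-- The rank over the subfield `Fq` of a vector with entries in `K`:
the `Fq`-dimension of the `Fq`-span of its coordinates. -/
noncomputable def rankQ (Fq : Type) {K : Type} [Field Fq] [Field K] [Algebra Fq K] {n : ℕ}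
    (v : Fin n → K) : ℕ :=
  Module.finrank Fq (Submodule.span Fq (Set.range v))

/-- The minimum rank distance of a linear rank-metric code `C ⊆ K^n`. -/
noncomputable def minRankDist (Fq : Type) {K : Type} [Field Fq] [Field K] [Algebra Fq K] {n : ℕ}
    (C : Submodule K (Fin n → K)) : ℕ :=
  sInf (rankQ Fq '' {c : Fin n → K | c ∈ C ∧ c ≠ 0})

/-- A linear code `C ⊆ K^n` of dimension `k` over `K` is MRD if its minimum
rank distance equals `n - k + 1`. -/
def IsMRD (Fq : Type) {K : Type} [Field Fq] [Field K] [Algebra Fq K] {n : ℕ}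
    (C : Submodule K (Fin n → K)) (k : ℕ) : Prop :=
  Module.finrank K C = k ∧ minRankDist Fq C = n - k + 1

/-- `G` is a generator matrix of `C`: its rows form a `K`-basis of `C`. -/
def IsGenMat {K : Type} [Field K] {k n : ℕ} (C : Submodule K (Fin n → K))
    (G : Matrix (Fin k) (Fin n) K) : Prop :=
  LinearIndependent K (fun i => G i) ∧ Submodule.span K (Set.range fun i => G i) = C

open Module Submodule

section PrimitiveElement

variable {F K : Type*} [Field F] [Field K] [Algebra F K] {α : K}

theorem adjoin_simple_eq_top_of_forall_eq_pow (hα : ∀ x : K, x ≠ 0 → ∃ i : ℕ, x = α ^ i) :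
    IntermediateField.adjoin F {α} = ⊤ := by
  refine eq_top_iff.mpr fun x _ => ?_
  by_cases hx : x = 0
  · exact hx ▸ zero_mem _
  · obtain ⟨i, rfl⟩ := hα x hx
    exact pow_mem (IntermediateField.mem_adjoin_simple_self F α) i

theorem linearIndependent_pow_of_forall_eq_pow [FiniteDimensional F K]
    (hα : ∀ x : K, x ≠ 0 → ∃ i : ℕ, x = α ^ i) {n : ℕ} (hn : n ≤ finrank F K) :
    LinearIndependent F (fun i : Fin n => α ^ (i : ℕ)) := by
  have hdeg : (minpoly F α).natDegree = finrank F K := by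
    rw [← IntermediateField.adjoin.finrank (IsIntegral.of_finite F α),
      adjoin_simple_eq_top_of_forall_eq_pow hα, IntermediateField.finrank_top']
  exact (linearIndependent_pow α).comp (Fin.castLE (hdeg ▸ hn)) (Fin.castLE_injective _)

theorem AlgHom.eq_one_of_apply_eq_self_of_forall_eq_pow
    (hα : ∀ x : K, x ≠ 0 → ∃ i : ℕ, x = α ^ i) {σ : K →ₐ[F] K} (hσ : σ α = α) : σ = 1 := by
  ext x
  by_cases hx : x = 0
  · simp [hx]
  · obtain ⟨i, rfl⟩ := hα x hx
    simp [hσ]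

end PrimitiveElement

section Frobenius

variable (Fq K : Type*) [Field Fq] [Fintype Fq] [Field K] [Algebra Fq K]

theorem finrank_eq_of_card_eq_pow [Fintype K] {q m : ℕ} (hq : Fintype.card Fq = q)
    (hK : Fintype.card K = q ^ m) : finrank Fq K = m := by
  have hq2 : 2 ≤ q := hq ▸ Fintype.one_lt_card
  refine Nat.pow_right_injective hq2 ?_
  simp only [← hq, ← card_eq_pow_finrank, hK]

theorem frobeniusAlgHom_pow_apply (s : ℕ) (x : K) :
    (FiniteField.frobeniusAlgHom Fq K ^ s) x = x ^ Fintype.card Fq ^ s := by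
  rw [AlgHom.coe_pow, FiniteField.coe_frobeniusAlgHom, pow_iterate]

theorem frobeniusAlgHom_pow_apply_ne_self [Finite K] {α : K}
    (hα : ∀ x : K, x ≠ 0 → ∃ i : ℕ, x = α ^ i) {t : ℕ} (ht : t ≠ 0) (htm : t < finrank Fq K) :
    (FiniteField.frobeniusAlgHom Fq K ^ t) α ≠ α := fun h =>
  pow_ne_one_of_lt_orderOf ht (FiniteField.orderOf_frobeniusAlgHom Fq K ▸ htm)
    (AlgHom.eq_one_of_apply_eq_self_of_forall_eq_pow hα h)

end Frobenius

section PairMinor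

variable {F : Type*} [Field F] {n : ℕ}

def pairMinor (l u : Fin n → F) (i j : Fin n) : F := l i * u j - l j * u i

theorem not_linearIndependent_of_pairMinor_eq_zero {l u : Fin n → F}
    (h : ∀ i j, pairMinor l u i j = 0) : ¬ LinearIndependent F ![l, u] := by
  simp only [LinearIndependent.pair_iff, not_forall]
  by_cases hl : l = 0
  · exact ⟨1, 0, by simp [hl], by simp⟩
  · obtain ⟨i, hi⟩ := Function.ne_iff.mp hl
    refine ⟨u i, -l i, funext fun j => ?_, fun h => by simp_all⟩
    have := h j i
    simp only [pairMinor] at this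
    simp only [Pi.add_apply, Pi.smul_apply, smul_eq_mul, Pi.zero_apply]
    linear_combination this

end PairMinor

section Code

variable {Fq K : Type*} [Field Fq] [Field K] [Algebra Fq K]

def row₁ (α : K) : Fin 4 → K := ![1, 0, α, α ^ 2]

def row₂ (c α : K) : Fin 4 → K := ![0, 1, α ^ 2, c * α]

theorem linearIndependent_row₁_row₂ (c α : K) : LinearIndependent K ![row₁ α, row₂ c α] := by
  refine LinearIndependent.pair_iff.mpr fun s t h => ⟨?_, ?_⟩
  · simpa [row₁, row₂] using congrFun h 0
  · simpa [row₁, row₂] using congrFun h 1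

theorem finrank_span_row₁_row₂ (c α : K) : finrank K (span K {row₁ α, row₂ c α}) = 2 := by
  rw [← Matrix.range_cons_cons_empty _ _ ![],
    finrank_span_eq_card (linearIndependent_row₁_row₂ c α), Fintype.card_fin]

theorem linearCombination_smul_add_smul {ι : Type*} [Fintype ι] (a b : K) (v w : ι → K)
    (l : ι → Fq) :
    Fintype.linearCombination Fq (a • v + b • w) l =
      a * Fintype.linearCombination Fq v l + b * Fintype.linearCombination Fq w l := by
  simp only [Fintype.linearCombination_apply, Pi.add_apply, Pi.smul_apply, smul_eq_mul, smul_add,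
    mul_smul_comm, Finset.sum_add_distrib, Finset.mul_sum]

def detCoeffs (γ : Fq) (l u : Fin 4 → Fq) : Fin 5 → Fq :=
  ![pairMinor l u 0 1, γ * pairMinor l u 0 3 - pairMinor l u 1 2,
    pairMinor l u 0 2 - pairMinor l u 1 3 + γ * pairMinor l u 2 3, 0, -pairMinor l u 2 3]

theorem linearCombination_rows_det (γ : Fq) (α : K) (l u : Fin 4 → Fq) :
    Fintype.linearCombination Fq (row₁ α) l *
        Fintype.linearCombination Fq (row₂ (algebraMap Fq K γ) α) u -
      Fintype.linearCombination Fq (row₁ α) u *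
        Fintype.linearCombination Fq (row₂ (algebraMap Fq K γ) α) l =
      ∑ i : Fin 5, detCoeffs γ l u i • α ^ (i : ℕ) := by
  simp only [Fintype.linearCombination_apply, Fin.sum_univ_four, Fin.sum_univ_five, row₁, row₂,
    detCoeffs, pairMinor, Algebra.smul_def, cons_val_zero, cons_val_one, cons_val,
    Fin.coe_ofNat_eq_mod, Nat.reduceMod, map_sub, map_mul, map_add, map_zero, map_neg]
  ring

theorem pairMinor_plucker (l u : Fin 4 → Fq) :
    pairMinor l u 0 1 * pairMinor l u 2 3 - pairMinor l u 0 2 * pairMinor l u 1 3 +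
      pairMinor l u 0 3 * pairMinor l u 1 2 = 0 := by
  simp only [pairMinor]
  ring

theorem pairMinor_eq_zero_of_detCoeffs_eq_zero {γ : Fq} (hγ : ∀ x : Fq, γ ≠ x ^ 2)
    {l u : Fin 4 → Fq} (h : ∀ i, detCoeffs γ l u i = 0) (i j : Fin 4) : pairMinor l u i j = 0 := by
  have h01 : pairMinor l u 0 1 = 0 := h 0
  have h12 : γ * pairMinor l u 0 3 - pairMinor l u 1 2 = 0 := h 1
  have h13 : pairMinor l u 0 2 - pairMinor l u 1 3 + γ * pairMinor l u 2 3 = 0 := h 2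
  have h23 : pairMinor l u 2 3 = 0 := neg_eq_zero.mp (h 4)
  have hsq : γ * pairMinor l u 0 3 ^ 2 = pairMinor l u 0 2 ^ 2 := by
    linear_combination pairMinor_plucker l u - pairMinor l u 0 1 * h23 +
      pairMinor l u 0 3 * h12 - pairMinor l u 0 2 * (h13 - γ * h23)
  have h03 : pairMinor l u 0 3 = 0 := by
    by_contra h03
    exact hγ (pairMinor l u 0 2 / pairMinor l u 0 3) (by field_simp; linear_combination hsq)
  have h02 : pairMinor l u 0 2 = 0 := by
    simpa [h03] using hsq.symm
  simp only [pairMinor] at h01 h23 h12 h13 h02 h03 ⊢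
  fin_cases i <;> fin_cases j <;> simp <;> grind

end Code

section Rank

variable {Fq K : Type} [Field Fq] [Field K] [Algebra Fq K]

theorem rankQ_add_finrank_ker {n : ℕ} (x : Fin n → K) :
    rankQ Fq x + finrank Fq (LinearMap.ker (Fintype.linearCombination Fq x)) = n := by
  rw [rankQ, ← Fintype.range_linearCombination, LinearMap.finrank_range_add_finrank_ker,
    finrank_fin_fun]

theorem rankQ_row₁ {α : K} (hα : LinearIndependent Fq (fun i : Fin 3 => α ^ (i : ℕ))) :
    rankQ Fq (row₁ α) = 3 := by
  have hrange : Set.range (row₁ α) = insert 0 (Set.range fun i : Fin 3 => α ^ (i : ℕ)) := by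
    ext y
    simp [row₁, Fin.exists_fin_succ, eq_comm (b := y), or_comm, or_left_comm, or_assoc]
  rw [rankQ, hrange, span_insert_zero, finrank_span_eq_card hα, Fintype.card_fin]

theorem finrank_ker_linearCombination_le_one {γ : Fq} (hγ : ∀ x : Fq, γ ≠ x ^ 2) {α : K}
    (hα : LinearIndependent Fq (fun i : Fin 5 => α ^ (i : ℕ))) {x : Fin 4 → K}
    (hx : x ∈ span K {row₁ α, row₂ (algebraMap Fq K γ) α}) (hx0 : x ≠ 0) :
    finrank Fq (LinearMap.ker (Fintype.linearCombination Fq x)) ≤ 1 := by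
  obtain ⟨a, b, rfl⟩ := mem_span_pair.mp hx
  have hab : a ≠ 0 ∨ b ≠ 0 := by
    by_contra! h
    simp [h.1, h.2] at hx0
  set P := Fintype.linearCombination Fq (row₁ α)
  set Q := Fintype.linearCombination Fq (row₂ (algebraMap Fq K γ) α)
  have hker : ∀ v ∈ LinearMap.ker (Fintype.linearCombination Fq (a • row₁ α +
      b • row₂ (algebraMap Fq K γ) α)), a * P v + b * Q v = 0 := fun v hv =>
    (linearCombination_smul_add_smul a b _ _ v).symm.trans hv
  by_contra! h
  obtain ⟨f, hf⟩ := exists_linearIndependent_of_le_finrank h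
  have hlu : LinearIndependent Fq ![(f 0 : Fin 4 → Fq), f 1] := by
    convert hf.map_injOn (LinearMap.ker _).subtype Subtype.val_injective.injOn using 1
    ext i : 1
    fin_cases i <;> rfl
  have hl := hker _ (f 0).2
  have hu := hker _ (f 1).2
  have hdet : P (f 0) * Q (f 1) - P (f 1) * Q (f 0) = 0 := by
    rcases hab with ha | hb
    · refine (mul_eq_zero.mp ?_).resolve_left ha
      linear_combination Q (f 1) * hl - Q (f 0) * hu
    · refine (mul_eq_zero.mp ?_).resolve_left hb
      linear_combination P (f 0) * hu - P (f 1) * hl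
  rw [linearCombination_rows_det] at hdet
  exact not_linearIndependent_of_pairMinor_eq_zero
    (pairMinor_eq_zero_of_detCoeffs_eq_zero hγ (Fintype.linearIndependent_iff.mp hα _ hdet)) hlu

theorem three_le_rankQ {γ : Fq} (hγ : ∀ x : Fq, γ ≠ x ^ 2) {α : K}
    (hα : LinearIndependent Fq (fun i : Fin 5 => α ^ (i : ℕ))) {x : Fin 4 → K}
    (hx : x ∈ span K {row₁ α, row₂ (algebraMap Fq K γ) α}) (hx0 : x ≠ 0) : 3 ≤ rankQ Fq x := by
  have := rankQ_add_finrank_ker (Fq := Fq) x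
  have := finrank_ker_linearCombination_le_one hγ hα hx hx0
  omega

theorem minRankDist_span_rows {γ : Fq} (hγ : ∀ x : Fq, γ ≠ x ^ 2) {α : K}
    (hα : LinearIndependent Fq (fun i : Fin 5 => α ^ (i : ℕ))) :
    minRankDist Fq (span K {row₁ α, row₂ (algebraMap Fq K γ) α}) = 3 := by
  refine IsLeast.csInf_eq ⟨⟨row₁ α, ⟨subset_span (Set.mem_insert _ _), ?_⟩, rankQ_row₁ ?_⟩, ?_⟩
  · exact fun h => one_ne_zero (congrFun h 0)
  · exact hα.comp (Fin.castLE (by norm_num)) (Fin.castLE_injective _)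
  · rintro _ ⟨x, ⟨hx, hx0⟩, rfl⟩
    exact three_le_rankQ hγ hα hx hx0

end Rank

section Conjugate

theorem comp_mem_span_pair {K L ι : Type*} [CommSemiring K] [CommSemiring L] (σ : K →+* L)
    {v a b : ι → K} (hv : v ∈ span K {a, b}) : σ ∘ v ∈ span L {σ ∘ a, σ ∘ b} := by
  obtain ⟨c, d, rfl⟩ := mem_span_pair.mp hv
  exact mem_span_pair.mpr ⟨σ c, σ d, by ext; simp⟩

variable {K : Type*} [Field K]

theorem comp_row₁ (σ : K →+* K) (α : K) : σ ∘ row₁ α = row₁ (σ α) := by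
  ext i; fin_cases i <;> simp [row₁]

theorem comp_row₂ (σ : K →+* K) {c : K} (hc : σ c = c) (α : K) :
    σ ∘ row₂ c α = row₂ c (σ α) := by
  ext i; fin_cases i <;> simp [row₂, hc]

theorem linearIndependent_rows_of_ne {c α β : K} (hαβ : α ≠ β) (hc : c ≠ (α + β) ^ 2) :
    LinearIndependent K ![row₁ α, row₂ c α, row₁ β, row₂ c β] := by
  refine Fintype.linearIndependent_iff.mpr fun x hx => ?_
  have h0 : x 0 + x 2 = 0 := by simpa [Fin.sum_univ_four, row₁, row₂] using congrFun hx 0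
  have h1 : x 1 + x 3 = 0 := by simpa [Fin.sum_univ_four, row₁, row₂] using congrFun hx 1
  have h2 : x 0 * α + x 1 * α ^ 2 + x 2 * β + x 3 * β ^ 2 = 0 := by
    simpa [Fin.sum_univ_four, row₁, row₂] using congrFun hx 2
  have h3 : x 0 * α ^ 2 + x 1 * (c * α) + x 2 * β ^ 2 + x 3 * (c * β) = 0 := by
    simpa [Fin.sum_univ_four, row₁, row₂] using congrFun hx 3
  have hαβ' : α - β ≠ 0 := sub_ne_zero.mpr hαβ
  have e2 : x 0 + x 1 * (α + β) = 0 := by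
    refine (mul_eq_zero.mp ?_).resolve_left hαβ'
    linear_combination h2 - β * h0 - β ^ 2 * h1
  have e3 : x 0 * (α + β) + x 1 * c = 0 := by
    refine (mul_eq_zero.mp ?_).resolve_left hαβ'
    linear_combination h3 - β ^ 2 * h0 - c * β * h1
  have hx1 : x 1 = 0 := by
    refine (mul_eq_zero.mp ?_).resolve_right (sub_ne_zero.mpr hc)
    linear_combination e3 - (α + β) * e2
  have hx0 : x 0 = 0 := by linear_combination e2 - (α + β) * hx1
  have hx2 : x 2 = 0 := by linear_combination h0 - hx0
  have hx3 : x 3 = 0 := by linear_combination h1 - hx1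
  intro i
  fin_cases i <;> assumption

theorem span_rows_ne_span_pair_comp (σ : K →+* K) {c α : K} (hc : σ c = c) (hα : σ α ≠ α)
    (hcα : c ≠ (σ α + α) ^ 2) (g : Fin 4 → K) :
    span K {row₁ α, row₂ c α} ≠ span K {g, σ ∘ g} := by
  intro h
  set W := span K (Set.range ![g, σ ∘ g, σ ∘ σ ∘ g])
  have hpair : span K {g, σ ∘ g} ≤ W :=
    span_le.mpr (Set.insert_subset (subset_span ⟨0, rfl⟩)
      (Set.singleton_subset_iff.mpr (subset_span ⟨1, rfl⟩)))
  have hpair' : span K {σ ∘ g, σ ∘ σ ∘ g} ≤ W :=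
    span_le.mpr (Set.insert_subset (subset_span ⟨1, rfl⟩)
      (Set.singleton_subset_iff.mpr (subset_span ⟨2, rfl⟩)))
  have hrow : ∀ v ∈ span K {row₁ α, row₂ c α}, v ∈ W ∧ σ ∘ v ∈ W := fun v hv =>
    ⟨hpair (h ▸ hv), hpair' (comp_mem_span_pair σ (h ▸ hv))⟩
  have hle : span K (Set.range ![row₁ α, row₂ c α, row₁ (σ α), row₂ c (σ α)]) ≤ W := by
    rw [span_le, Set.range_subset_iff]
    intro i
    fin_cases i
    · exact (hrow _ (subset_span (Set.mem_insert _ _))).1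
    · exact (hrow _ (subset_span (Set.mem_insert_of_mem _ rfl))).1
    · exact comp_row₁ σ α ▸ (hrow _ (subset_span (Set.mem_insert _ _))).2
    · exact comp_row₂ σ hc α ▸ (hrow _ (subset_span (Set.mem_insert_of_mem _ rfl))).2
  have hli := linearIndependent_rows_of_ne hα.symm (add_comm α (σ α) ▸ hcα)
  have : 4 ≤ 3 := calc
    4 = finrank K (span K (Set.range ![row₁ α, row₂ c α, row₁ (σ α), row₂ c (σ α)])) := by
      rw [finrank_span_eq_card hli, Fintype.card_fin]
    _ ≤ finrank K W := finrank_mono hle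
    _ ≤ 3 := finrank_range_le_card _
  omega

end Conjugate

theorem span_rows_ne_span_frobenius_pow (Fq : Type*) {K : Type*} [Field Fq] [Fintype Fq]
    [Field K] [Finite K] [Algebra Fq K] {α : K} (hα : ∀ x : K, x ≠ 0 → ∃ i : ℕ, x = α ^ i)
    (hK : 1 < finrank Fq K) {γ : Fq}
    (hγ : ∀ t : ℕ, 0 < t → t < finrank Fq K → Nat.gcd t (finrank Fq K) = 1 →
      algebraMap Fq K γ ≠ (α ^ Fintype.card Fq ^ t + α) ^ 2)
    {s : ℕ} (hs : Nat.gcd s (finrank Fq K) = 1) (g : Fin 4 → K) :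
    span K {row₁ α, row₂ (algebraMap Fq K γ) α} ≠
      span K {g, fun j => g j ^ Fintype.card Fq ^ s} := by
  set φ := FiniteField.frobeniusAlgHom Fq K
  set m := finrank Fq K
  have hsm : Nat.gcd (s % m) m = 1 := by rwa [← Nat.gcd_rec, Nat.gcd_comm]
  have hs0 : s % m ≠ 0 := fun h => by simp [h] at hsm; omega
  have hφs : φ ^ s = φ ^ (s % m) := by
    rw [← pow_mod_orderOf, FiniteField.orderOf_frobeniusAlgHom]
  have hg : (fun j => g j ^ Fintype.card Fq ^ s) = (φ ^ s).toRingHom ∘ g := by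
    ext j
    rw [Function.comp_apply, AlgHom.toRingHom_eq_coe, AlgHom.coe_toRingHom,
      frobeniusAlgHom_pow_apply]
  rw [hg]
  refine span_rows_ne_span_pair_comp (α := α) _ ((φ ^ s).commutes γ) ?_ ?_ g
  · rw [AlgHom.toRingHom_eq_coe, AlgHom.coe_toRingHom, hφs]
    exact frobeniusAlgHom_pow_apply_ne_self Fq K hα hs0 (Nat.mod_lt s (by omega))
  · rw [AlgHom.toRingHom_eq_coe, AlgHom.coe_toRingHom, hφs, frobeniusAlgHom_pow_apply]
    exact hγ _ (Nat.pos_of_ne_zero hs0) (Nat.mod_lt s (by omega)) hsm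

/-- for `m > 4`, a primitive `α ∈ F_{q^m}` and a quadratic non-residue
`γ ∈ F_q` with `γ ≠ (α^{q^s} + α)²` for all `0 < s < m` with `gcd(s,m) = 1`, the code
spanned by `(1, 0, α, α²)` and `(0, 1, α², γα)` is MRD of dimension 2 but not a
generalized Gabidulin code. -/
theorem stmt16 {q m : ℕ} (Fq K : Type) [Field Fq] [Fintype Fq] [Field K] [Fintype K]
    [Algebra Fq K] (hq : Fintype.card Fq = q) (hK : Fintype.card K = q ^ m)
    (hm : 4 < m)
    (α : K) (hα : ∀ x : K, x ≠ 0 → ∃ i : ℕ, x = α ^ i)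
    (γ : Fq) (hγQNR : ∀ x : Fq, γ ≠ x ^ 2)
    (hγ : ∀ s : ℕ, 0 < s → s < m → Nat.gcd s m = 1 →
      algebraMap Fq K γ ≠ (α ^ q ^ s + α) ^ 2)
    (C : Submodule K (Fin 4 → K))
    (hC : C = Submodule.span K
      ({![1, 0, α, α ^ 2], ![0, 1, α ^ 2, algebraMap Fq K γ * α]} : Set (Fin 4 → K))) :
    IsMRD Fq C 2 ∧
      ¬ ∃ (s : ℕ) (g : Fin 4 → K), Nat.gcd s m = 1 ∧ LinearIndependent Fq g ∧
        C = Submodule.span K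
          ({(fun j => g j), (fun j => (g j) ^ q ^ s)} : Set (Fin 4 → K)) := by
  have hfin : finrank Fq K = m := finrank_eq_of_card_eq_pow Fq K hq hK
  have hpow : LinearIndependent Fq (fun i : Fin 5 => α ^ (i : ℕ)) :=
    linearIndependent_pow_of_forall_eq_pow hα (by omega)
  subst hC hq hfin
  refine ⟨⟨finrank_span_row₁_row₂ _ α, minRankDist_span_rows hγQNR hpow⟩, ?_⟩
  rintro ⟨s, g, hs, -, hCg⟩
  exact span_rows_ne_span_frobenius_pow Fq hα (by omega) hγ hs g hCg
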